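/- arXiv:math/0611952 — 3 statements merged into one kernel-verified Lean document; each statement's English description precedes it below -/
import Mathlib

section
/- If C is a model category (with fibrant replacement) and F : C ⥤ D carries weak equivalences between fibrant objects of C to isomorphisms in D, then F admits an absolute right derived functor (RF, α) along the localization functor P : C ⥤ C[W⁻¹] at the weak equivalences; concretely, RF can be constructed so that RF(X) = F(X') for a chosen fibrant resolution i_X : X ⟶ X' with i_X a weak equivalence and X' fibrant, and α_X = F(i_X). -/
open CategoryTheory

universe w w'

section Defs

variable {C : Type*} [Category C] {D : Type*} [Category D] {E : Type*} [Category E]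

/-- `(RF, α)` is a right derived functor of `F` along `P`, i.e. a left Kan extension
of `F` along `P` in the 2-categorical sense. -/
def IsRightDerived (P : C ⥤ D) (F : C ⥤ E) (RF : D ⥤ E) (α : F ⟶ P ⋙ RF) : Prop :=
  ∀ (G : D ⥤ E) (γ : F ⟶ P ⋙ G), ∃! δ : RF ⟶ G, γ = α ≫ Functor.whiskerLeft P δ

/-- `(LF, α)` is a left derived functor of `F` along `P`, i.e. a right Kan extension. -/
def IsLeftDerived (P : C ⥤ D) (F : C ⥤ E) (LF : D ⥤ E) (α : P ⋙ LF ⟶ F) : Prop :=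
  ∀ (G : D ⥤ E) (γ : P ⋙ G ⟶ F), ∃! δ : G ⟶ LF, γ = Functor.whiskerLeft P δ ≫ α

/-- Absolute right derived functor: the Kan extension property is preserved by
post-composition with any functor. -/
def IsAbsoluteRightDerived (P : C ⥤ D) (F : C ⥤ E) (RF : D ⥤ E) (α : F ⟶ P ⋙ RF) : Prop :=
  ∀ (E' : Type w) [Category.{w'} E'] (H : E ⥤ E'),
    IsRightDerived P (F ⋙ H) (RF ⋙ H) (Functor.whiskerRight α H ≫ (Functor.associator P RF H).hom)

/-- Absolute left derived functor. -/
def IsAbsoluteLeftDerived (P : C ⥤ D) (F : C ⥤ E) (LF : D ⥤ E) (α : P ⋙ LF ⟶ F) : Prop :=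
  ∀ (E' : Type w) [Category.{w'} E'] (H : E ⥤ E'),
    IsLeftDerived P (F ⋙ H) (LF ⋙ H) ((Functor.associator P LF H).inv ≫ Functor.whiskerRight α H)

end Defs

section Model

/-- `f` is a retract of `f'` in the arrow category. -/
def IsRetractOf {C : Type*} [Category C] {X Y X' Y' : C} (f : X ⟶ Y) (f' : X' ⟶ Y') : Prop :=
  ∃ (s : X ⟶ X') (r : X' ⟶ X) (s' : Y ⟶ Y') (r' : Y' ⟶ Y),
    s ≫ r = 𝟙 X ∧ s' ≫ r' = 𝟙 Y ∧ s ≫ f' = f ≫ s' ∧ f' ≫ r' = r ≫ f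

/-- A Quillen model structure: weak equivalences, fibrations, cofibrations, with
two-out-of-three, retract stability, lifting and factorization axioms. -/
structure ModelStruct (C : Type*) [Category C] where
  W : MorphismProperty C
  Fib : MorphismProperty C
  Cof : MorphismProperty C
  W_of_iso : ∀ {X Y : C} (f : X ⟶ Y), IsIso f → W f
  W_comp : ∀ {X Y Z : C} (f : X ⟶ Y) (g : Y ⟶ Z), W f → W g → W (f ≫ g)
  W_of_comp_left : ∀ {X Y Z : C} (f : X ⟶ Y) (g : Y ⟶ Z), W g → W (f ≫ g) → W f
  W_of_comp_right : ∀ {X Y Z : C} (f : X ⟶ Y) (g : Y ⟶ Z), W f → W (f ≫ g) → W g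
  W_retract : ∀ {X Y X' Y' : C} (f : X ⟶ Y) (f' : X' ⟶ Y'), IsRetractOf f f' → W f' → W f
  Fib_retract : ∀ {X Y X' Y' : C} (f : X ⟶ Y) (f' : X' ⟶ Y'), IsRetractOf f f' → Fib f' → Fib f
  Cof_retract : ∀ {X Y X' Y' : C} (f : X ⟶ Y) (f' : X' ⟶ Y'), IsRetractOf f f' → Cof f' → Cof f
  lift_cof_trivFib : ∀ {A B X Y : C} (i : A ⟶ B) (p : X ⟶ Y), Cof i → Fib p → W p →
    HasLiftingProperty i p
  lift_trivCof_fib : ∀ {A B X Y : C} (i : A ⟶ B) (p : X ⟶ Y), Cof i → W i → Fib p →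
    HasLiftingProperty i p
  fact_cof_trivFib : ∀ {X Y : C} (f : X ⟶ Y),
    ∃ (Z : C) (i : X ⟶ Z) (p : Z ⟶ Y), Cof i ∧ Fib p ∧ W p ∧ i ≫ p = f
  fact_trivCof_fib : ∀ {X Y : C} (f : X ⟶ Y),
    ∃ (Z : C) (i : X ⟶ Z) (p : Z ⟶ Y), Cof i ∧ W i ∧ Fib p ∧ i ≫ p = f

/-- An object is fibrant if the map to the terminal object is a fibration. -/
def ModelStruct.Fibrant {C : Type*} [Category C] [Limits.HasTerminal C]
    (M : ModelStruct C) (X : C) : Prop :=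
  M.Fib (Limits.terminal.from X)

/-- An object is cofibrant if the map from the initial object is a cofibration. -/
def ModelStruct.Cofibrant {C : Type*} [Category C] [Limits.HasInitial C]
    (M : ModelStruct C) (X : C) : Prop :=
  M.Cof (Limits.initial.to X)

end Model

/-!
Choose a fibrant replacement `ι X : X ⟶ ρ X` by a trivial cofibration. Every `f : X ⟶ Y` lifts to
some `ρ f` with `ι X ≫ ρ f = f ≫ ι Y`, and any two such lifts are right homotopic through a path
object `Y ⟶ PY ⟶ Y ⨯ Y` of the fibrant target. Since `F` inverts the weak equivalence `Y ⟶ PY`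
between fibrant objects, it identifies the two projections `PY ⟶ Y`, hence right homotopic maps.
So `X ↦ F (ρ X)` is a functor inverting weak equivalences; it descends to `RF` on the localization,
with `α X = F (ι X)`.

The Kan extension property only uses that each `α (ρ X)` and each `P (ι X)` is invertible: given
`γ : F ⟶ P ⋙ G`, the comparison `δ` is forced to be `RF (P ι X) ≫ α (ρ X)⁻¹ ≫ γ (ρ X) ≫ G (P ι X)⁻¹`
at `P X`, and this is natural because the lifts `ρ f` exist. Both conditions survive composing with
any `H`, which gives absoluteness.
-/

section Resolutions

variable {C D E : Type*} [Category C] [Category D] [Category E]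
  (L : C ⥤ D) (W : MorphismProperty C) [L.IsLocalization W]

theorem isRightDerived_of_resolutions (F : C ⥤ E) (RF : D ⥤ E) (α : F ⟶ L ⋙ RF)
    (r : C → C) (i : ∀ X, X ⟶ r X) (hi : ∀ X, W (i X))
    (hr : ∀ {X Y : C} (f : X ⟶ Y), ∃ g : r X ⟶ r Y, i X ≫ g = f ≫ i Y)
    (hα : ∀ X, IsIso (α.app (r X))) :
    IsRightDerived L F RF α := by
  intro G γ
  let e X := Localization.isoOfHom L W (i X) (hi X)
  let τ : L ⋙ RF ⟶ L ⋙ G :=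
    { app X := RF.map (e X).hom ≫ inv (α.app (r X)) ≫ γ.app (r X) ≫ G.map (e X).inv
      naturality X Y f := by
        obtain ⟨g, hg⟩ := hr f
        have hLg : (e X).hom ≫ L.map g = L.map f ≫ (e Y).hom := by
          simp only [e, Localization.isoOfHom_hom, ← L.map_comp, hg]
        have hLg' : L.map g ≫ (e Y).inv = (e X).inv ≫ L.map f := by
          rw [Iso.eq_inv_comp, ← Category.assoc, hLg]
          simp
        have hαg : inv (α.app (r X)) ≫ F.map g = RF.map (L.map g) ≫ inv (α.app (r Y)) := by
          simp
        simp only [Functor.comp_map, Category.assoc]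
        rw [← RF.map_comp_assoc, ← hLg, RF.map_comp_assoc, ← reassoc_of% hαg,
          reassoc_of% (γ.naturality g), ← G.map_comp, hLg', G.map_comp] }
  have hγ : ∀ X, α.app X ≫ τ.app X = γ.app X := by
    intro X
    have hαi : α.app X ≫ RF.map (e X).hom ≫ inv (α.app (r X)) = F.map (i X) := by
      rw [← Category.assoc, IsIso.comp_inv_eq]
      simp [e]
    simp only [τ, reassoc_of% hαi, reassoc_of% (γ.naturality (i X))]
    simp [e, ← G.map_comp]
  let δ₀ := (Localization.whiskeringLeftFunctor' L W E).preimage τ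
  have hδ₀ : ∀ X, δ₀.app (L.obj X) = τ.app X :=
    congr_app (Functor.map_preimage (Localization.whiskeringLeftFunctor' L W E) τ)
  refine ⟨δ₀, ?_, fun δ hδ => Localization.natTrans_ext L W fun X => ?_⟩
  · ext X
    simp [hδ₀, hγ]
  · have h := congr_app hδ (r X)
    simp only [NatTrans.comp_app, Functor.whiskerLeft_app] at h
    simp [hδ₀, τ, h]

theorem isAbsoluteRightDerived_of_resolutions (F : C ⥤ E) (RF : D ⥤ E) (α : F ⟶ L ⋙ RF)
    (r : C → C) (i : ∀ X, X ⟶ r X) (hi : ∀ X, W (i X))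
    (hr : ∀ {X Y : C} (f : X ⟶ Y), ∃ g : r X ⟶ r Y, i X ≫ g = f ≫ i Y)
    (hα : ∀ X, IsIso (α.app (r X))) :
    IsAbsoluteRightDerived L F RF α := fun _ _ H =>
  isRightDerived_of_resolutions L W _ _ _ r i hi hr fun X => by
    dsimp
    infer_instance

end Resolutions

namespace ModelStruct

open Limits

variable {C : Type*} [Category C] (M : ModelStruct C)

theorem fib_of_hasLiftingProperty {X Y : C} (p : X ⟶ Y)
    (h : ∀ {A B : C} (j : A ⟶ B), M.Cof j → M.W j → HasLiftingProperty j p) : M.Fib p := by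
  obtain ⟨Z, j, q, hjc, hjw, hqf, hjq⟩ := M.fact_trivCof_fib p
  have := h j hjc hjw
  have sq : CommSq (𝟙 X) j p q := ⟨by simp [hjq]⟩
  exact M.Fib_retract p q
    ⟨j, sq.lift, 𝟙 Y, 𝟙 Y, sq.fac_left, by simp, by simp [hjq], by simp⟩ hqf

section Fibrant

variable [HasTerminal C]

theorem fibrant_iff_exists_extension {Y : C} :
    M.Fibrant Y ↔ ∀ {A B : C} (j : A ⟶ B), M.Cof j → M.W j → ∀ u : A ⟶ Y, ∃ v, j ≫ v = u := by
  constructor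
  · intro hY A B j hjc hjw u
    have := M.lift_trivCof_fib j _ hjc hjw hY
    have sq : CommSq u j (terminal.from Y) (terminal.from B) := ⟨terminal.hom_ext _ _⟩
    exact ⟨sq.lift, sq.fac_left⟩
  · intro h
    refine M.fib_of_hasLiftingProperty _ fun j hjc hjw => ⟨fun {u _} _ => ?_⟩
    obtain ⟨v, hv⟩ := h j hjc hjw u
    exact ⟨⟨⟨v, hv, terminal.hom_ext _ _⟩⟩⟩

theorem exists_fibrantReplacement (X : C) :
    ∃ (Z : C) (i : X ⟶ Z), M.Cof i ∧ M.W i ∧ M.Fibrant Z := by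
  obtain ⟨Z, i, p, hic, hiw, hp, -⟩ := M.fact_trivCof_fib (terminal.from X)
  refine ⟨Z, i, hic, hiw, ?_⟩
  rwa [ModelStruct.Fibrant, terminal.hom_ext (terminal.from Z) p]

theorem fibrant_of_fib {P Y : C} (q : P ⟶ Y) (hq : M.Fib q) (hY : M.Fibrant Y) :
    M.Fibrant P := by
  rw [fibrant_iff_exists_extension] at hY ⊢
  intro A B j hjc hjw u
  obtain ⟨v, hv⟩ := hY j hjc hjw (u ≫ q)
  have := M.lift_trivCof_fib j q hjc hjw hq
  have sq : CommSq u j q v := ⟨hv.symm⟩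
  exact ⟨sq.lift, sq.fac_left⟩

theorem fibrant_prod {Y Y' : C} [HasBinaryProduct Y Y'] (hY : M.Fibrant Y) (hY' : M.Fibrant Y') :
    M.Fibrant (Y ⨯ Y') := by
  rw [fibrant_iff_exists_extension] at hY hY' ⊢
  intro A B j hjc hjw u
  obtain ⟨v, hv⟩ := hY j hjc hjw (u ≫ prod.fst)
  obtain ⟨v', hv'⟩ := hY' j hjc hjw (u ≫ prod.snd)
  exact ⟨prod.lift v v', by ext <;> simp [hv, hv', prod.lift_fst, prod.lift_snd]⟩

theorem map_eq_map_of_comp_eq [HasBinaryProducts C] {D : Type*} [Category D] (F : C ⥤ D)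
    (hF : ∀ {X Y : C} (f : X ⟶ Y), M.W f → M.Fibrant X → M.Fibrant Y → IsIso (F.map f))
    {X X' Y : C} (i : X ⟶ X') (hic : M.Cof i) (hiw : M.W i) (hY : M.Fibrant Y)
    (g g' : X' ⟶ Y) (h : i ≫ g = i ≫ g') : F.map g = F.map g' := by
  obtain ⟨PY, s, q, -, hsw, hqf, hsq⟩ := M.fact_trivCof_fib (prod.lift (𝟙 Y) (𝟙 Y))
  have hP := M.fibrant_of_fib q hqf (M.fibrant_prod hY hY)
  have := hF s hsw hY hP
  have hfst_snd : F.map (q ≫ prod.fst) = F.map (q ≫ prod.snd) := by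
    rw [← cancel_epi (F.map s)]
    simp only [← F.map_comp, reassoc_of% hsq, prod.lift_fst, prod.lift_snd]
  have := M.lift_trivCof_fib i q hic hiw hqf
  have sq : CommSq (i ≫ g ≫ s) i q (prod.lift g g') :=
    ⟨by ext <;> simp [reassoc_of% hsq, prod.lift_fst, prod.lift_snd, h]⟩
  have hg : sq.lift ≫ q ≫ prod.fst = g := by simp [reassoc_of% sq.fac_right, prod.lift_fst]
  have hg' : sq.lift ≫ q ≫ prod.snd = g' := by simp [reassoc_of% sq.fac_right, prod.lift_snd]
  calc F.map g = F.map sq.lift ≫ F.map (q ≫ prod.fst) := by rw [← F.map_comp, hg]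
    _ = F.map sq.lift ≫ F.map (q ≫ prod.snd) := by rw [hfst_snd]
    _ = F.map g' := by rw [← F.map_comp, hg']

structure FibrantReplacement where
  obj : C → C
  ι : ∀ X, X ⟶ obj X
  cof_ι : ∀ X, M.Cof (ι X)
  w_ι : ∀ X, M.W (ι X)
  fibrant : ∀ X, M.Fibrant (obj X)

theorem nonempty_fibrantReplacement : Nonempty M.FibrantReplacement := by
  choose r i hc hw hr using M.exists_fibrantReplacement
  exact ⟨⟨r, i, hc, hw, hr⟩⟩

namespace FibrantReplacement

variable {M} (ρ : M.FibrantReplacement)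

theorem exists_ι_comp_eq {X Y : C} (f : X ⟶ Y) : ∃ g, ρ.ι X ≫ g = f ≫ ρ.ι Y :=
  (M.fibrant_iff_exists_extension.1 (ρ.fibrant Y)) _ (ρ.cof_ι X) (ρ.w_ι X) _

noncomputable def map {X Y : C} (f : X ⟶ Y) : ρ.obj X ⟶ ρ.obj Y :=
  (ρ.exists_ι_comp_eq f).choose

theorem ι_map {X Y : C} (f : X ⟶ Y) : ρ.ι X ≫ ρ.map f = f ≫ ρ.ι Y :=
  (ρ.exists_ι_comp_eq f).choose_spec

variable [HasBinaryProducts C] {D : Type*} [Category D] (F : C ⥤ D)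
  (hF : ∀ {X Y : C} (f : X ⟶ Y), M.W f → M.Fibrant X → M.Fibrant Y → IsIso (F.map f))

noncomputable def compFunctor : C ⥤ D where
  obj X := F.obj (ρ.obj X)
  map f := F.map (ρ.map f)
  map_id X := by
    rw [← F.map_id]
    exact M.map_eq_map_of_comp_eq F hF _ (ρ.cof_ι X) (ρ.w_ι X) (ρ.fibrant X) _ _ (by simp [ι_map])
  map_comp f g := by
    rw [← F.map_comp]
    exact M.map_eq_map_of_comp_eq F hF _ (ρ.cof_ι _) (ρ.w_ι _) (ρ.fibrant _) _ _
      (by rw [ι_map, reassoc_of% ρ.ι_map f, ι_map, Category.assoc])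

noncomputable def toCompFunctor : F ⟶ ρ.compFunctor F hF where
  app X := F.map (ρ.ι X)
  naturality X Y f := by
    dsimp [compFunctor]
    rw [← F.map_comp, ← F.map_comp, ι_map]

theorem compFunctor_inverts : M.W.IsInvertedBy (ρ.compFunctor F hF) := fun X Y f hf =>
  hF _ (M.W_of_comp_right (ρ.ι X) _ (ρ.w_ι X) (by simpa [ι_map] using M.W_comp _ _ hf (ρ.w_ι Y)))
    (ρ.fibrant X) (ρ.fibrant Y)

end FibrantReplacement

end Fibrant

end ModelStruct

theorem stmt6_general {C : Type*} [Category C] {D : Type*} [Category D]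
    [Limits.HasFiniteLimits C]
    (M : ModelStruct C) (F : C ⥤ D)
    (hF : ∀ {X Y : C} (f : X ⟶ Y), M.W f → M.Fibrant X → M.Fibrant Y → IsIso (F.map f)) :
    ∃ (r : C → C) (i : ∀ X : C, X ⟶ r X),
      (∀ X : C, M.W (i X) ∧ M.Fibrant (r X)) ∧
      ∃ (RF : M.W.Localization ⥤ D) (α : F ⟶ M.W.Q ⋙ RF),
        IsAbsoluteRightDerived M.W.Q F RF α ∧
        ∀ X : C, ∃ h : RF.obj (M.W.Q.obj X) = F.obj (r X),
          α.app X = F.map (i X) ≫ eqToHom h.symm := by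
  obtain ⟨ρ⟩ := M.nonempty_fibrantReplacement
  let RF := Localization.Construction.lift _ (ρ.compFunctor_inverts F hF)
  have hRF : M.W.Q ⋙ RF = ρ.compFunctor F hF := Localization.Construction.fac _ _
  let α := ρ.toCompFunctor F hF ≫ eqToHom hRF.symm
  have hα : ∀ X, IsIso (α.app (ρ.obj X)) := fun X => by
    have : IsIso (F.map (ρ.ι (ρ.obj X))) := hF _ (ρ.w_ι _) (ρ.fibrant X) (ρ.fibrant _)
    rw [NatTrans.comp_app, eqToHom_app]
    exact IsIso.comp_isIso' this inferInstance
  refine ⟨ρ.obj, ρ.ι, fun X => ⟨ρ.w_ι X, ρ.fibrant X⟩, RF, α,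
    isAbsoluteRightDerived_of_resolutions _ M.W _ _ _ ρ.obj ρ.ι ρ.w_ι ρ.exists_ι_comp_eq hα,
    fun X => ⟨Functor.congr_obj hRF X, by rw [NatTrans.comp_app, eqToHom_app]; rfl⟩⟩

/-- if `F` sends weak equivalences between fibrant objects to isomorphisms,
then `F` has an absolute right derived functor along the localization at the weak
equivalences, constructed via a fibrant replacement `i X : X ⟶ r X` so that
`RF (P.obj X) = F.obj (r X)` and `α.app X = F.map (i X)` (modulo that identification). -/
theorem stmt6 {C : Type*} [Category C] {D : Type*} [Category D]
    [Limits.HasFiniteLimits C] [Limits.HasFiniteColimits C]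
    (M : ModelStruct C) (F : C ⥤ D)
    (hF : ∀ {X Y : C} (f : X ⟶ Y), M.W f → M.Fibrant X → M.Fibrant Y → IsIso (F.map f)) :
    ∃ (r : C → C) (i : ∀ X : C, X ⟶ r X),
      (∀ X : C, M.W (i X) ∧ M.Fibrant (r X)) ∧
      ∃ (RF : M.W.Localization ⥤ D) (α : F ⟶ M.W.Q ⋙ RF),
        IsAbsoluteRightDerived M.W.Q F RF α ∧
        ∀ X : C, ∃ h : RF.obj (M.W.Q.obj X) = F.obj (r X),
          α.app X = F.map (i X) ≫ eqToHom h.symm :=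
  stmt6_general M F hF
end

section
/- If C and C' are model categories and F : C ⥤ C' carries weak equivalences between fibrant objects of C to weak equivalences in C', then F admits an absolute total right derived functor, i.e., the composite F ⋙ P' (where P' : C' ⥤ C'[W'⁻¹] is localization at weak equivalences) admits an absolute right derived functor along P : C ⥤ C[W⁻¹]. -/
open CategoryTheory

universe w w'

/-!
A model structure in the sense of `ModelStruct` makes `C` a model category in Mathlib's sense,
and the inclusion of the fibrant objects is then a right derivability structure
(Kahn–Maltsiniotis). A functor inverting the weak equivalences between fibrant objects is
derivable along it, and its right derived functor is detected by its unit being invertible at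
fibrant objects. Post-composition preserves that invertibility, so the derived functor is
absolute.
-/

open Limits HomotopicalAlgebra

section

variable {C : Type*} [Category C] {D : Type*} [Category D] {E : Type*} [Category E]

lemma isRightDerived_of_isRightDerivedFunctor {L : C ⥤ D} (W : MorphismProperty C)
    [L.IsLocalization W] {F : C ⥤ E} {RF : D ⥤ E} (α : F ⟶ L ⋙ RF)
    [RF.IsRightDerivedFunctor α W] : IsRightDerived L F RF α :=
  fun G γ => ⟨RF.rightDerivedDesc α W G γ, (RF.rightDerived_fac α W G γ).symm,
    fun δ hδ => RF.rightDerived_ext α W G _ _ (by rw [← hδ, RF.rightDerived_fac])⟩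

lemma CategoryTheory.LocalizerMorphism.Derives.isAbsoluteRightDerived
    {C₀ : Type*} [Category C₀] {W₀ : MorphismProperty C₀} {W : MorphismProperty C}
    {Φ : LocalizerMorphism W₀ W} [Φ.IsRightDerivabilityStructure] {F : C ⥤ E}
    (hF : Φ.Derives F) {L : C ⥤ D} [L.IsLocalization W] {RF : D ⥤ E} (α : F ⟶ L ⋙ RF)
    [RF.IsRightDerivedFunctor α W] :
    IsAbsoluteRightDerived.{w, w'} L F RF α := by
  intro E' _ H
  have hFH : Φ.Derives (F ⋙ H) := hF.of_comp _ _ H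
  have := hFH.isRightDerivedFunctor_of_isIso
    (Functor.whiskerRight α H ≫ (Functor.associator L RF H).hom) fun X => by
      have := hF.isIso_of_isRightDerivedFunctor α X
      dsimp
      infer_instance
  exact isRightDerived_of_isRightDerivedFunctor W _

namespace HomotopicalAlgebra

variable [ModelCategory C]

lemma FibrantObject.localizerMorphism_derives {F : C ⥤ E}
    (hF : ∀ {X Y : C} (f : X ⟶ Y) [IsFibrant X] [IsFibrant Y], weakEquivalences C f →
      IsIso (F.map f)) :
    (FibrantObject.localizerMorphism C).Derives F := by
  intro X Y f hf
  have := X.property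
  have := Y.property
  exact hF f.hom hf

theorem exists_isAbsoluteRightDerived_of_isFibrant (L : C ⥤ D)
    [L.IsLocalization (weakEquivalences C)] (F : C ⥤ E)
    (hF : ∀ {X Y : C} (f : X ⟶ Y) [IsFibrant X] [IsFibrant Y], weakEquivalences C f →
      IsIso (F.map f)) :
    ∃ (RF : D ⥤ E) (α : F ⟶ L ⋙ RF), IsAbsoluteRightDerived.{w, w'} L F RF α := by
  have hderives := FibrantObject.localizerMorphism_derives hF
  have := hderives.hasPointwiseRightDerivedFunctor
  exact ⟨_, _, hderives.isAbsoluteRightDerived (F.totalRightDerivedUnit L (weakEquivalences C))⟩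

end HomotopicalAlgebra

end

namespace ModelStruct

variable {C : Type*} [Category C]

lemma isRetractOf_of_retractArrow {X Y X' Y' : C} {f : X ⟶ Y} {f' : X' ⟶ Y'}
    (h : RetractArrow f f') : IsRetractOf f f' :=
  ⟨h.i.left, h.r.left, h.i.right, h.r.right, h.retract_left, h.retract_right, h.i_w, h.r_w.symm⟩

abbrev toModelCategory [HasFiniteLimits C] [HasFiniteColimits C] (M : ModelStruct C) :
    ModelCategory C where
  categoryWithWeakEquivalences := ⟨M.W⟩
  categoryWithFibrations := ⟨M.Fib⟩
  categoryWithCofibrations := ⟨M.Cof⟩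
  cm2 :=
    { comp_mem := M.W_comp
      of_postcomp := M.W_of_comp_left
      of_precomp := M.W_of_comp_right }
  cm3a := ⟨fun h => M.W_retract _ _ (isRetractOf_of_retractArrow h)⟩
  cm3b := ⟨fun h => M.Fib_retract _ _ (isRetractOf_of_retractArrow h)⟩
  cm3c := ⟨fun h => M.Cof_retract _ _ (isRetractOf_of_retractArrow h)⟩
  cm4a i p hi hi' hp := M.lift_trivCof_fib i p hi.mem hi'.mem hp.mem
  cm4b i p hi hp hp' := M.lift_cof_trivFib i p hi.mem hp.mem hp'.mem
  cm5a := ⟨fun f => by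
    obtain ⟨Z, i, p, hic, hiw, hp, fac⟩ := M.fact_trivCof_fib f
    exact ⟨{ Z, i, p, fac, hi := ⟨hic, hiw⟩, hp }⟩⟩
  cm5b := ⟨fun f => by
    obtain ⟨Z, i, p, hi, hpf, hpw, fac⟩ := M.fact_cof_trivFib f
    exact ⟨{ Z, i, p, fac, hi, hp := ⟨hpf, hpw⟩ }⟩⟩

end ModelStruct

theorem stmt7_general {C : Type*} [Category C] {C' : Type*} [Category C']
    [Limits.HasFiniteLimits C] [Limits.HasFiniteColimits C]
    (M : ModelStruct C) (M' : ModelStruct C') (F : C ⥤ C')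
    (hF : ∀ {X Y : C} (f : X ⟶ Y), M.W f → M.Fibrant X → M.Fibrant Y → M'.W (F.map f)) :
    ∃ (RF : M.W.Localization ⥤ M'.W.Localization) (α : F ⋙ M'.W.Q ⟶ M.W.Q ⋙ RF),
      IsAbsoluteRightDerived M.W.Q (F ⋙ M'.W.Q) RF α := by
  let := M.toModelCategory
  have : M.W.Q.IsLocalization (weakEquivalences C) := inferInstanceAs (M.W.Q.IsLocalization M.W)
  exact exists_isAbsoluteRightDerived_of_isFibrant M.W.Q (F ⋙ M'.W.Q) fun f hX hY hf =>
    M'.W.Q_inverts _ (hF f hf hX.1 hY.1)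

/-- if `F : C ⥤ C'` sends weak equivalences between fibrant objects to weak
equivalences, then `F` has an absolute total right derived functor, i.e. `F ⋙ P'` has an
absolute right derived functor along `P`. -/
theorem stmt7 {C : Type*} [Category C] {C' : Type*} [Category C']
    [Limits.HasFiniteLimits C] [Limits.HasFiniteColimits C]
    [Limits.HasFiniteLimits C'] [Limits.HasFiniteColimits C']
    (M : ModelStruct C) (M' : ModelStruct C') (F : C ⥤ C')
    (hF : ∀ {X Y : C} (f : X ⟶ Y), M.W f → M.Fibrant X → M.Fibrant Y → M'.W (F.map f)) :
    ∃ (RF : M.W.Localization ⥤ M'.W.Localization) (α : F ⋙ M'.W.Q ⟶ M.W.Q ⋙ RF),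
      IsAbsoluteRightDerived M.W.Q (F ⋙ M'.W.Q) RF α :=
  stmt7_general M M' F hF
end

section
/- Adjunction of derived functors between homotopy categories of a Quillen adjunction, derived from the abstract theorem: if F ⊣ G is a Quillen adjunction between model categories C and C' (F preserves cofibrations and trivial cofibrations), then F preserves weak equivalences between cofibrant objects and G preserves weak equivalences between fibrant objects, hence LF ⊣ RG between the homotopy categories. -/
open CategoryTheory

universe w w'

/-!
Ken Brown's lemma: for `f : X ⟶ Y` between cofibrant objects, factor `(f, 𝟙) : X ⨿ Y ⟶ Y` as
a cofibration `X ⨿ Y ⟶ Z` followed by a trivial fibration `p`. The composites `X ⟶ Z` and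
`Y ⟶ Z` are trivial cofibrations and the second one is a section of `p`, so a functor sending
trivial cofibrations to weak equivalences sends `p`, hence `f`, to a weak equivalence by
two-out-of-three. Lifting problems transpose along `F ⊣ G`, so `G` preserves trivial fibrations
and the dual lemma applies to it.

`LF` descends `X ↦ F (Q X)` to the homotopy category, where `Q X ⟶ X` is a cofibrant
resolution. Two lifts of a map to the resolutions are left homotopic through a cylinder, and a
functor inverting trivial cofibrations identifies left homotopic maps, so `X ↦ F (Q X)` is a
functor; it inverts weak equivalences by Ken Brown's lemma. Its counit is invertible on cofibrant
objects, which makes it an absolute right Kan extension of `F` along the localization. `RG` is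
the dual construction, carried out in the opposite model structure, and an adjunction `F ⊣ G`
descends to absolute derived functors (Maltsiniotis), which gives `LF ⊣ RG`.
-/

section Resolutions

open Functor

variable {C D E : Type*} [Category C] [Category D] [Category E]
  {L : C ⥤ D} (W : MorphismProperty C) [L.IsLocalization W] {K : C ⥤ E}

section LiftOfResolution

variable {LF : D ⥤ E} (α : L ⋙ LF ⟶ K) {R : C → C} (p : ∀ X, R X ⟶ X) (hp : ∀ X, W (p X))
  (hlift : ∀ {X Y : C} (f : X ⟶ Y), ∃ f' : R X ⟶ R Y, f' ≫ p Y = p X ≫ f)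
  (hα : ∀ X, IsIso (α.app (R X)))

/-- The value at `R X` is forced by `γ = whiskerLeft L δ ≫ α`; it is transported to `X` along the
isomorphism `L.map (p X)`. -/
noncomputable def liftOfResolution {G : D ⥤ E} (γ : L ⋙ G ⟶ K) : L ⋙ G ⟶ L ⋙ LF where
  app X :=
    have := Localization.inverts L W _ (hp X)
    inv (G.map (L.map (p X))) ≫ γ.app (R X) ≫ inv (α.app (R X)) ≫ LF.map (L.map (p X))
  naturality X Y f := by
    have := Localization.inverts L W _ (hp X)
    have := Localization.inverts L W _ (hp Y)
    obtain ⟨f', hf'⟩ := hlift f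
    have hγ := γ.naturality f'
    have hα' : K.map f' ≫ inv (α.app (R Y)) = inv (α.app (R X)) ≫ LF.map (L.map f') := by
      rw [IsIso.comp_inv_eq, Category.assoc, ← Functor.comp_map, α.naturality f',
        IsIso.inv_hom_id_assoc]
    dsimp at hγ ⊢
    rw [← cancel_epi (G.map (L.map (p X)))]
    simp only [Category.assoc, IsIso.hom_inv_id_assoc]
    rw [← G.map_comp_assoc, ← L.map_comp, ← hf', L.map_comp, G.map_comp, Category.assoc,
      IsIso.hom_inv_id_assoc, reassoc_of% hγ, reassoc_of% hα', ← LF.map_comp, ← L.map_comp,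
      hf', L.map_comp, LF.map_comp]

theorem liftOfResolution_comp {G : D ⥤ E} (γ : L ⋙ G ⟶ K) :
    liftOfResolution W α p hp hlift hα γ ≫ α = γ := by
  ext X
  have := Localization.inverts L W _ (hp X)
  have hα' := α.naturality (p X)
  have hγ := γ.naturality (p X)
  dsimp [liftOfResolution] at hα' hγ ⊢
  rw [Category.assoc, Category.assoc, Category.assoc, hα', IsIso.inv_hom_id_assoc, ← hγ,
    IsIso.inv_hom_id_assoc]

theorem whiskerLeft_eq_liftOfResolution {G : D ⥤ E} {γ : L ⋙ G ⟶ K} {δ : G ⟶ LF}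
    (hδ : γ = whiskerLeft L δ ≫ α) :
    whiskerLeft L δ = liftOfResolution W α p hp hlift hα γ := by
  ext X
  have := Localization.inverts L W _ (hp X)
  have hδX := congr_app hδ (R X)
  dsimp [liftOfResolution] at hδX ⊢
  rw [IsIso.eq_inv_comp, hδX, Category.assoc, IsIso.hom_inv_id_assoc, ← δ.naturality]

end LiftOfResolution

theorem isLeftDerived_of_resolution {LF : D ⥤ E} (α : L ⋙ LF ⟶ K) {R : C → C}
    (p : ∀ X, R X ⟶ X) (hp : ∀ X, W (p X))
    (hlift : ∀ {X Y : C} (f : X ⟶ Y), ∃ f' : R X ⟶ R Y, f' ≫ p Y = p X ≫ f)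
    (hα : ∀ X, IsIso (α.app (R X))) :
    IsLeftDerived L K LF α := by
  intro G γ
  obtain ⟨δ, hδ⟩ := (Localization.whiskeringLeftFunctor' L W E).map_surjective
    (liftOfResolution W α p hp hlift hα γ)
  change whiskerLeft L δ = _ at hδ
  refine ⟨δ, ?_, fun δ' hδ' => ?_⟩
  · show γ = whiskerLeft L δ ≫ α
    rw [hδ, liftOfResolution_comp]
  · exact (Localization.whiskeringLeftFunctor' L W E).map_injective
      ((whiskerLeft_eq_liftOfResolution W α p hp hlift hα hδ').trans hδ.symm)

theorem isAbsoluteLeftDerived_of_resolution {LF : D ⥤ E} (α : L ⋙ LF ⟶ K) {R : C → C}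
    (p : ∀ X, R X ⟶ X) (hp : ∀ X, W (p X))
    (hlift : ∀ {X Y : C} (f : X ⟶ Y), ∃ f' : R X ⟶ R Y, f' ≫ p Y = p X ≫ f)
    (hα : ∀ X, IsIso (α.app (R X))) :
    IsAbsoluteLeftDerived.{w, w'} L K LF α := fun _ _ H =>
  isLeftDerived_of_resolution W _ p hp hlift fun X => by
    have := hα X
    dsimp
    infer_instance

theorem isRightDerived_of_isLeftDerived_op {RF : D ⥤ E} {β : K ⟶ L ⋙ RF}
    (h : IsLeftDerived L.op K.op RF.op (NatTrans.op β)) : IsRightDerived L K RF β := by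
  intro G γ
  obtain ⟨δ, hδ, huniq⟩ := h G.op (NatTrans.op γ)
  refine ⟨NatTrans.removeOp δ, ?_, fun δ' hδ' => ?_⟩
  · ext X
    simpa using congr_arg Quiver.Hom.unop (congr_app hδ (Opposite.op X))
  · rw [← huniq (NatTrans.op δ') (by ext X; simp [hδ'])]
    rfl

theorem isRightDerived_of_resolution {RF : D ⥤ E} (β : K ⟶ L ⋙ RF) {R : C → C}
    (j : ∀ X, X ⟶ R X) (hj : ∀ X, W (j X))
    (hlift : ∀ {X Y : C} (f : X ⟶ Y), ∃ f' : R X ⟶ R Y, j X ≫ f' = f ≫ j Y)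
    (hβ : ∀ X, IsIso (β.app (R X))) :
    IsRightDerived L K RF β := by
  refine isRightDerived_of_isLeftDerived_op
    (isLeftDerived_of_resolution (L := L.op) (K := K.op) (LF := RF.op) W.op (NatTrans.op β)
      (R := fun X => Opposite.op (R X.unop))
      (fun X => (j X.unop).op) (fun X => hj X.unop) (fun f => ?_) (fun X => ?_))
  · obtain ⟨f', hf'⟩ := hlift f.unop
    exact ⟨f'.op, Quiver.Hom.unop_inj hf'⟩
  · dsimp
    infer_instance

theorem isAbsoluteRightDerived_of_resolution {RF : D ⥤ E} (β : K ⟶ L ⋙ RF) {R : C → C}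
    (j : ∀ X, X ⟶ R X) (hj : ∀ X, W (j X))
    (hlift : ∀ {X Y : C} (f : X ⟶ Y), ∃ f' : R X ⟶ R Y, j X ≫ f' = f ≫ j Y)
    (hβ : ∀ X, IsIso (β.app (R X))) :
    IsAbsoluteRightDerived.{w, w'} L K RF β := fun _ _ H =>
  isRightDerived_of_resolution W _ j hj hlift fun X => by
    have := hβ X
    dsimp
    infer_instance

theorem IsLeftDerived.isLeftDerivedFunctor {LF : D ⥤ E} {α : L ⋙ LF ⟶ K}
    (h : IsLeftDerived L K LF α) : LF.IsLeftDerivedFunctor α W := by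
  refine ⟨⟨⟨Limits.IsTerminal.ofUniqueHom
    (fun y => CostructuredArrow.homMk (h y.left y.hom).exists.choose
      (h y.left y.hom).exists.choose_spec.symm) fun y m => ?_⟩⟩⟩
  ext1
  exact (h y.left y.hom).unique (CostructuredArrow.w m).symm
    (h y.left y.hom).exists.choose_spec

theorem IsRightDerived.isRightDerivedFunctor {RF : D ⥤ E} {β : K ⟶ L ⋙ RF}
    (h : IsRightDerived L K RF β) : RF.IsRightDerivedFunctor β W := by
  refine ⟨⟨⟨Limits.IsInitial.ofUniqueHom
    (fun y => StructuredArrow.homMk (h y.right y.hom).exists.choose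
      (h y.right y.hom).exists.choose_spec.symm) fun y m => ?_⟩⟩⟩
  ext1
  exact (h y.right y.hom).unique (StructuredArrow.w m).symm
    (h y.right y.hom).exists.choose_spec

end Resolutions

theorem IsRetractOf.unop {C : Type*} [Category C] {X Y X' Y' : Cᵒᵖ} {f : X ⟶ Y}
    {f' : X' ⟶ Y'} (h : IsRetractOf f f') : IsRetractOf f.unop f'.unop := by
  obtain ⟨s, r, s', r', hs, hs', h₁, h₂⟩ := h
  exact ⟨r'.unop, s'.unop, r.unop, s.unop, congr_arg Quiver.Hom.unop hs',
    congr_arg Quiver.Hom.unop hs, congr_arg Quiver.Hom.unop h₂, congr_arg Quiver.Hom.unop h₁⟩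

theorem isRetractOf_of_hasLiftingProperty {C : Type*} [Category C] {A B Z : C} {i : A ⟶ B}
    {j : A ⟶ Z} {q : Z ⟶ B} (fac : j ≫ q = i) [HasLiftingProperty i q] : IsRetractOf i j :=
  have sq : CommSq j i q (𝟙 B) := ⟨by simp [fac]⟩
  ⟨𝟙 A, 𝟙 A, sq.lift, q, by simp, sq.fac_right, by simp [sq.fac_left], by simp [fac]⟩

namespace ModelStruct

open Limits

variable {C : Type*} [Category C] (M : ModelStruct C)

def op : ModelStruct Cᵒᵖ where
  W := M.W.op
  Fib := M.Cof.op
  Cof := M.Fib.op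
  W_of_iso f _ := M.W_of_iso f.unop inferInstance
  W_comp f g hf hg := M.W_comp g.unop f.unop hg hf
  W_of_comp_left f g hg hfg := M.W_of_comp_right g.unop f.unop hg hfg
  W_of_comp_right f g hf hfg := M.W_of_comp_left g.unop f.unop hf hfg
  W_retract _ _ h := M.W_retract _ _ h.unop
  Fib_retract _ _ h := M.Cof_retract _ _ h.unop
  Cof_retract _ _ h := M.Fib_retract _ _ h.unop
  lift_cof_trivFib i p hi hp hpW := (M.lift_trivCof_fib p.unop i.unop hp hpW hi).op
  lift_trivCof_fib i p hi hiW hp := (M.lift_cof_trivFib p.unop i.unop hp hi hiW).op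
  fact_cof_trivFib f := by
    obtain ⟨Z, i, p, hi, hiW, hp, hfac⟩ := M.fact_trivCof_fib f.unop
    exact ⟨Opposite.op Z, p.op, i.op, hp, hi, hiW, congr_arg Quiver.Hom.op hfac⟩
  fact_trivCof_fib f := by
    obtain ⟨Z, i, p, hi, hp, hpW, hfac⟩ := M.fact_cof_trivFib f.unop
    exact ⟨Opposite.op Z, p.op, i.op, hp, hpW, hi, congr_arg Quiver.Hom.op hfac⟩

instance : M.W.HasTwoOutOfThreeProperty where
  comp_mem f g := M.W_comp f g
  of_postcomp f g := M.W_of_comp_left f g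
  of_precomp f g := M.W_of_comp_right f g

instance : M.W.ContainsIdentities := ⟨fun _ => M.W_of_iso _ inferInstance⟩

theorem isIso_op_map_of_trivCof_op {E : Type*} [Category E] (K : C ⥤ E)
    (hK : ∀ {X Y : C} (f : X ⟶ Y), M.Fib f → M.W f → IsIso (K.map f))
    {X Y : Cᵒᵖ} (f : X ⟶ Y) (hf : M.op.Cof f) (hfW : M.op.W f) : IsIso (K.op.map f) := by
  have := hK f.unop hf hfW
  dsimp
  infer_instance

theorem cof_of_hasLiftingProperty {A B : C} (i : A ⟶ B)
    (h : ∀ {X Y : C} (p : X ⟶ Y), M.Fib p → M.W p → HasLiftingProperty i p) : M.Cof i := by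
  obtain ⟨Z, j, q, hj, hq, hqW, fac⟩ := M.fact_cof_trivFib i
  have := h q hq hqW
  exact M.Cof_retract i j (isRetractOf_of_hasLiftingProperty fac) hj

theorem cof_and_W_of_hasLiftingProperty {A B : C} (i : A ⟶ B)
    (h : ∀ {X Y : C} (p : X ⟶ Y), M.Fib p → HasLiftingProperty i p) : M.Cof i ∧ M.W i := by
  obtain ⟨Z, j, q, hj, hjW, hq, fac⟩ := M.fact_trivCof_fib i
  have := h q hq
  have hr := isRetractOf_of_hasLiftingProperty fac
  exact ⟨M.Cof_retract i j hr hj, M.W_retract i j hr hjW⟩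

theorem cof_of_isIso {A B : C} (i : A ⟶ B) [IsIso i] : M.Cof i :=
  M.cof_of_hasLiftingProperty i fun _ _ _ => inferInstance

theorem cof_comp {X Y Z : C} {f : X ⟶ Y} {g : Y ⟶ Z} (hf : M.Cof f) (hg : M.Cof g) :
    M.Cof (f ≫ g) :=
  M.cof_of_hasLiftingProperty _ fun p hp hpW =>
    have := M.lift_cof_trivFib f p hf hp hpW
    have := M.lift_cof_trivFib g p hg hp hpW
    inferInstance

theorem fib_comp {X Y Z : C} {f : X ⟶ Y} {g : Y ⟶ Z} (hf : M.Fib f) (hg : M.Fib g) :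
    M.Fib (f ≫ g) :=
  M.op.cof_comp (f := g.op) (g := f.op) hg hf

theorem fib_of_isIso {X Y : C} (p : X ⟶ Y) [IsIso p] : M.Fib p :=
  M.op.cof_of_isIso p.op

theorem fib_and_W_of_hasLiftingProperty {X Y : C} (p : X ⟶ Y)
    (h : ∀ {A B : C} (i : A ⟶ B), M.Cof i → HasLiftingProperty i p) : M.Fib p ∧ M.W p :=
  M.op.cof_and_W_of_hasLiftingProperty p.op fun i hi => (h i.unop hi).op

theorem fib_and_W_map_of_adjunction {C' : Type*} [Category C'] {M' : ModelStruct C'}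
    {F : C ⥤ C'} {G : C' ⥤ C} (adj : F ⊣ G)
    (hF : ∀ {X Y : C} (f : X ⟶ Y), M.Cof f → M'.Cof (F.map f))
    {X Y : C'} {p : X ⟶ Y} (hp : M'.Fib p) (hpW : M'.W p) : M.Fib (G.map p) ∧ M.W (G.map p) :=
  M.fib_and_W_of_hasLiftingProperty _ fun i hi =>
    (adj.hasLiftingProperty_iff i p).1 (M'.lift_cof_trivFib _ p (hF i hi) hp hpW)

theorem cof_coprod_inl [HasInitial C] [HasBinaryCoproducts C] {X Y : C} (hY : M.Cofibrant Y) :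
    M.Cof (coprod.inl : X ⟶ X ⨿ Y) := by
  refine M.cof_of_hasLiftingProperty _ fun p hp hpW => ⟨fun {f g} sq => ?_⟩
  have := M.lift_cof_trivFib _ p hY hp hpW
  have sqY : CommSq (initial.to _) (initial.to Y) p (coprod.inr ≫ g) := ⟨initial.hom_ext _ _⟩
  exact ⟨⟨⟨coprod.desc f sqY.lift, coprod.inl_desc _ _, coprod.hom_ext
    (by rw [coprod.inl_desc_assoc, sq.w]) (by rw [coprod.inr_desc_assoc, sqY.fac_right])⟩⟩⟩

theorem cof_coprod_inr [HasInitial C] [HasBinaryCoproducts C] {X Y : C} (hX : M.Cofibrant X) :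
    M.Cof (coprod.inr : Y ⟶ X ⨿ Y) := by
  rw [← coprod.inl_desc coprod.inr coprod.inl]
  exact M.cof_comp (M.cof_coprod_inl hX) (M.cof_of_isIso (coprod.braiding Y X).hom)

theorem fibrant_iff_cofibrant_op [HasTerminal C] {X : C} :
    M.Fibrant X ↔ M.op.Cofibrant (Opposite.op X) := by
  have hT : IsTerminal (Opposite.unop (⊥_ Cᵒᵖ)) := initialIsInitial.unop
  let e := hT.uniqueUpToIso terminalIsTerminal
  have h₁ : (initial.to (Opposite.op X)).unop = terminal.from X ≫ e.inv := hT.hom_ext _ _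
  have h₂ : terminal.from X = (initial.to (Opposite.op X)).unop ≫ e.hom := terminal.hom_ext _ _
  change M.Fib _ ↔ M.Fib (initial.to (Opposite.op X)).unop
  exact ⟨fun h => h₁ ▸ M.fib_comp h (M.fib_of_isIso _),
    fun h => h₂ ▸ M.fib_comp h (M.fib_of_isIso _)⟩

section Cofibrant

variable [HasInitial C]

theorem exists_cofibrant_trivFib (X : C) :
    ∃ (X' : C) (p : X' ⟶ X), M.Cofibrant X' ∧ M.Fib p ∧ M.W p := by
  obtain ⟨X', i, p, hi, hp, hpW, -⟩ := M.fact_cof_trivFib (initial.to X)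
  exact ⟨X', p, by rwa [Cofibrant, initial.hom_ext (initial.to X') i], hp, hpW⟩

theorem exists_lift_of_cofibrant {A X Y : C} (hA : M.Cofibrant A) {p : X ⟶ Y} (hp : M.Fib p)
    (hpW : M.W p) (g : A ⟶ Y) : ∃ l : A ⟶ X, l ≫ p = g := by
  have := M.lift_cof_trivFib _ p hA hp hpW
  have sq : CommSq (initial.to X) (initial.to A) p g := ⟨initial.hom_ext _ _⟩
  exact ⟨sq.lift, sq.fac_right⟩

noncomputable def cofibrantResolution (X : C) : C := (M.exists_cofibrant_trivFib X).choose

noncomputable def cofibrantResolutionπ (X : C) : M.cofibrantResolution X ⟶ X :=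
  (M.exists_cofibrant_trivFib X).choose_spec.choose

theorem cofibrant_cofibrantResolution (X : C) : M.Cofibrant (M.cofibrantResolution X) :=
  (M.exists_cofibrant_trivFib X).choose_spec.choose_spec.1

theorem fib_cofibrantResolutionπ (X : C) : M.Fib (M.cofibrantResolutionπ X) :=
  (M.exists_cofibrant_trivFib X).choose_spec.choose_spec.2.1

theorem W_cofibrantResolutionπ (X : C) : M.W (M.cofibrantResolutionπ X) :=
  (M.exists_cofibrant_trivFib X).choose_spec.choose_spec.2.2

theorem exists_cofibrantResolution_lift {X Y : C} (f : X ⟶ Y) :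
    ∃ f' : M.cofibrantResolution X ⟶ M.cofibrantResolution Y,
      f' ≫ M.cofibrantResolutionπ Y = M.cofibrantResolutionπ X ≫ f :=
  M.exists_lift_of_cofibrant (M.cofibrant_cofibrantResolution X) (M.fib_cofibrantResolutionπ Y)
    (M.W_cofibrantResolutionπ Y) _

noncomputable def cofibrantResolutionMap {X Y : C} (f : X ⟶ Y) :
    M.cofibrantResolution X ⟶ M.cofibrantResolution Y :=
  (M.exists_cofibrantResolution_lift f).choose

theorem cofibrantResolutionMap_π {X Y : C} (f : X ⟶ Y) :
    M.cofibrantResolutionMap f ≫ M.cofibrantResolutionπ Y = M.cofibrantResolutionπ X ≫ f :=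
  (M.exists_cofibrantResolution_lift f).choose_spec

variable [HasBinaryCoproducts C] {E : Type*} [Category E]

theorem kenBrown (W' : MorphismProperty E) [W'.HasTwoOutOfThreeProperty] [W'.ContainsIdentities]
    (K : C ⥤ E) (hK : ∀ {X Y : C} (f : X ⟶ Y), M.Cof f → M.W f → W' (K.map f))
    {X Y : C} {f : X ⟶ Y} (hf : M.W f) (hX : M.Cofibrant X) (hY : M.Cofibrant Y) :
    W' (K.map f) := by
  obtain ⟨Z, q, p, hq, hp, hpW, hfac⟩ := M.fact_cof_trivFib (coprod.desc f (𝟙 Y))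
  have h₀ : (coprod.inl ≫ q) ≫ p = f := by rw [Category.assoc, hfac, coprod.inl_desc]
  have h₁ : (coprod.inr ≫ q) ≫ p = 𝟙 Y := by rw [Category.assoc, hfac, coprod.inr_desc]
  have hK₀ : W' (K.map (coprod.inl ≫ q)) :=
    hK _ (M.cof_comp (M.cof_coprod_inl hY) hq) (M.W.of_postcomp _ p hpW (h₀ ▸ hf))
  have hK₁ : W' (K.map (coprod.inr ≫ q)) :=
    hK _ (M.cof_comp (M.cof_coprod_inr hX) hq) (M.W.of_postcomp _ p hpW (h₁ ▸ M.W.id_mem Y))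
  have hKp : W' (K.map p) :=
    W'.of_precomp _ _ hK₁ (by rw [← K.map_comp, h₁, K.map_id]; exact W'.id_mem _)
  rw [← h₀, K.map_comp]
  exact W'.comp_mem _ _ hK₀ hKp

theorem map_eq_of_comp_eq (K : C ⥤ E)
    (hK : ∀ {X Y : C} (f : X ⟶ Y), M.Cof f → M.W f → IsIso (K.map f))
    {A B T : C} (hA : M.Cofibrant A) {u v : A ⟶ B} {p : B ⟶ T} (hp : M.Fib p) (hpW : M.W p)
    (h : u ≫ p = v ≫ p) : K.map u = K.map v := by
  obtain ⟨Z, c, σ, hc, -, hσW, hfac⟩ := M.fact_cof_trivFib (coprod.desc (𝟙 A) (𝟙 A))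
  have := M.lift_cof_trivFib c p hc hp hpW
  have sq : CommSq (coprod.desc u v) c p (σ ≫ u ≫ p) := ⟨by
    rw [← Category.assoc c, hfac]
    apply coprod.hom_ext
    · rw [coprod.inl_desc_assoc, coprod.inl_desc_assoc, Category.id_comp]
    · rw [coprod.inr_desc_assoc, coprod.inr_desc_assoc, Category.id_comp, h]⟩
  obtain ⟨H, hH⟩ : ∃ H, c ≫ H = coprod.desc u v := ⟨sq.lift, sq.fac_left⟩
  have hsec (i : A ⟶ A ⨿ A) (hi : i ≫ coprod.desc (𝟙 A) (𝟙 A) = 𝟙 A) :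
      (i ≫ c) ≫ σ = 𝟙 A := by rw [Category.assoc, hfac, hi]
  have hinl := hsec coprod.inl (coprod.inl_desc _ _)
  have := hK _ (M.cof_comp (M.cof_coprod_inl hA) hc)
    (M.W.of_postcomp _ σ hσW (hinl ▸ M.W.id_mem A))
  -- `K` inverts one end of the cylinder `Z`, so `K.map σ` is its inverse and both ends agree
  have hKσ := IsIso.eq_inv_of_hom_inv_id (by rw [← K.map_comp, hinl, K.map_id])
  have hends : K.map (coprod.inr ≫ c) = K.map (coprod.inl ≫ c) := by
    rw [← comp_inv_eq_id, ← hKσ, ← K.map_comp, hsec coprod.inr (coprod.inr_desc _ _),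
      K.map_id]
  have hu : (coprod.inl ≫ c) ≫ H = u := by rw [Category.assoc, hH, coprod.inl_desc]
  have hv : (coprod.inr ≫ c) ≫ H = v := by rw [Category.assoc, hH, coprod.inr_desc]
  rw [← hu, ← hv, K.map_comp _ H, K.map_comp _ H, hends]

theorem map_eq_of_cofibrantResolution (K : C ⥤ E)
    (hK : ∀ {X Y : C} (f : X ⟶ Y), M.Cof f → M.W f → IsIso (K.map f)) {X Y : C}
    {u v : M.cofibrantResolution X ⟶ M.cofibrantResolution Y}
    (h : u ≫ M.cofibrantResolutionπ Y = v ≫ M.cofibrantResolutionπ Y) : K.map u = K.map v :=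
  M.map_eq_of_comp_eq K hK (M.cofibrant_cofibrantResolution X) (M.fib_cofibrantResolutionπ Y)
    (M.W_cofibrantResolutionπ Y) h

variable (K : C ⥤ E) (hK : ∀ {X Y : C} (f : X ⟶ Y), M.Cof f → M.W f → IsIso (K.map f))

noncomputable def leftResolution : C ⥤ E where
  obj X := K.obj (M.cofibrantResolution X)
  map f := K.map (M.cofibrantResolutionMap f)
  map_id X := by
    rw [← K.map_id]
    exact M.map_eq_of_cofibrantResolution K hK (by simp [cofibrantResolutionMap_π])
  map_comp f g := by
    rw [← K.map_comp]
    exact M.map_eq_of_cofibrantResolution K hK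
      (by rw [Category.assoc, cofibrantResolutionMap_π, cofibrantResolutionMap_π,
        reassoc_of% M.cofibrantResolutionMap_π f])

noncomputable def leftResolutionπ : M.leftResolution K hK ⟶ K where
  app X := K.map (M.cofibrantResolutionπ X)
  naturality X Y f := by
    dsimp [leftResolution]
    rw [← K.map_comp, ← K.map_comp, cofibrantResolutionMap_π]

theorem leftResolution_inverts : M.W.IsInvertedBy (M.leftResolution K hK) := fun X Y f hf => by
  have hf' : M.W (M.cofibrantResolutionMap f) :=
    M.W.of_postcomp _ _ (M.W_cofibrantResolutionπ Y)
      (by rw [cofibrantResolutionMap_π]; exact M.W.comp_mem _ _ (M.W_cofibrantResolutionπ X) hf)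
  exact M.kenBrown (MorphismProperty.isomorphisms E) K hK hf'
    (M.cofibrant_cofibrantResolution X) (M.cofibrant_cofibrantResolution Y)

noncomputable def totalLeftDerived : M.W.Localization ⥤ E :=
  Localization.lift _ (M.leftResolution_inverts K hK) M.W.Q

noncomputable def totalLeftDerivedCounit : M.W.Q ⋙ M.totalLeftDerived K hK ⟶ K :=
  (Localization.fac _ _ _).hom ≫ M.leftResolutionπ K hK

theorem isIso_totalLeftDerivedCounit_app {X : C} (hX : M.Cofibrant X) :
    IsIso ((M.totalLeftDerivedCounit K hK).app X) := by
  have : IsIso (K.map (M.cofibrantResolutionπ X)) :=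
    M.kenBrown (MorphismProperty.isomorphisms E) K hK (M.W_cofibrantResolutionπ X)
      (M.cofibrant_cofibrantResolution X) hX
  exact IsIso.comp_isIso' (f := (Localization.fac _ _ M.W.Q).hom.app X) inferInstance this

theorem isLeftDerived_totalLeftDerived :
    IsLeftDerived M.W.Q K (M.totalLeftDerived K hK) (M.totalLeftDerivedCounit K hK) :=
  isLeftDerived_of_resolution M.W _ M.cofibrantResolutionπ M.W_cofibrantResolutionπ
    M.exists_cofibrantResolution_lift
    fun X => M.isIso_totalLeftDerivedCounit_app K hK (M.cofibrant_cofibrantResolution X)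

theorem isAbsoluteLeftDerived_totalLeftDerived :
    IsAbsoluteLeftDerived.{w, w'} M.W.Q K (M.totalLeftDerived K hK)
      (M.totalLeftDerivedCounit K hK) :=
  isAbsoluteLeftDerived_of_resolution M.W _ M.cofibrantResolutionπ M.W_cofibrantResolutionπ
    M.exists_cofibrantResolution_lift
    fun X => M.isIso_totalLeftDerivedCounit_app K hK (M.cofibrant_cofibrantResolution X)

end Cofibrant

section Fibrant

variable [HasTerminal C]

noncomputable def fibrantResolution (X : C) : C :=
  Opposite.unop (M.op.cofibrantResolution (Opposite.op X))

noncomputable def fibrantResolutionι (X : C) : X ⟶ M.fibrantResolution X :=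
  (M.op.cofibrantResolutionπ (Opposite.op X)).unop

theorem fibrant_fibrantResolution (X : C) : M.Fibrant (M.fibrantResolution X) :=
  M.fibrant_iff_cofibrant_op.2 (M.op.cofibrant_cofibrantResolution _)

theorem W_fibrantResolutionι (X : C) : M.W (M.fibrantResolutionι X) :=
  M.op.W_cofibrantResolutionπ _

theorem exists_fibrantResolution_lift {X Y : C} (f : X ⟶ Y) :
    ∃ f' : M.fibrantResolution X ⟶ M.fibrantResolution Y,
      M.fibrantResolutionι X ≫ f' = f ≫ M.fibrantResolutionι Y := by
  obtain ⟨f', hf'⟩ := M.op.exists_cofibrantResolution_lift f.op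
  exact ⟨f'.unop, congr_arg Quiver.Hom.unop hf'⟩

variable [HasBinaryProducts C] {E : Type*} [Category E]
  (K : C ⥤ E) (hK : ∀ {X Y : C} (f : X ⟶ Y), M.Fib f → M.W f → IsIso (K.map f))

noncomputable def rightResolution : C ⥤ E :=
  (M.op.leftResolution K.op (M.isIso_op_map_of_trivCof_op K hK)).unop

noncomputable def rightResolutionι : K ⟶ M.rightResolution K hK :=
  NatTrans.unop (M.op.leftResolutionπ K.op (M.isIso_op_map_of_trivCof_op K hK))

theorem rightResolution_inverts : M.W.IsInvertedBy (M.rightResolution K hK) :=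
  fun _ _ f hf => by
    have := M.op.leftResolution_inverts K.op (M.isIso_op_map_of_trivCof_op K hK) f.op hf
    dsimp [rightResolution]
    infer_instance

noncomputable def totalRightDerived : M.W.Localization ⥤ E :=
  Localization.lift _ (M.rightResolution_inverts K hK) M.W.Q

noncomputable def totalRightDerivedUnit : K ⟶ M.W.Q ⋙ M.totalRightDerived K hK :=
  M.rightResolutionι K hK ≫ (Localization.fac _ _ _).inv

theorem isIso_totalRightDerivedUnit_app {X : C} (hX : M.Fibrant X) :
    IsIso ((M.totalRightDerivedUnit K hK).app X) := by
  have : IsIso (K.op.map (M.op.cofibrantResolutionπ (Opposite.op X))) :=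
    M.op.kenBrown (MorphismProperty.isomorphisms Eᵒᵖ) K.op (M.isIso_op_map_of_trivCof_op K hK)
      (M.op.W_cofibrantResolutionπ _) (M.op.cofibrant_cofibrantResolution _)
      (M.fibrant_iff_cofibrant_op.1 hX)
  exact IsIso.comp_isIso' (h := (Localization.fac _ _ M.W.Q).inv.app X)
    (inferInstanceAs (IsIso (K.op.map _).unop)) inferInstance

theorem isRightDerived_totalRightDerived :
    IsRightDerived M.W.Q K (M.totalRightDerived K hK) (M.totalRightDerivedUnit K hK) :=
  isRightDerived_of_resolution M.W _ M.fibrantResolutionι M.W_fibrantResolutionι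
    M.exists_fibrantResolution_lift
    fun X => M.isIso_totalRightDerivedUnit_app K hK (M.fibrant_fibrantResolution X)

theorem isAbsoluteRightDerived_totalRightDerived :
    IsAbsoluteRightDerived.{w, w'} M.W.Q K (M.totalRightDerived K hK)
      (M.totalRightDerivedUnit K hK) :=
  isAbsoluteRightDerived_of_resolution M.W _ M.fibrantResolutionι M.W_fibrantResolutionι
    M.exists_fibrantResolution_lift
    fun X => M.isIso_totalRightDerivedUnit_app K hK (M.fibrant_fibrantResolution X)

end Fibrant

end ModelStruct

theorem stmt17_general {C : Type*} [Category C] {C' : Type*} [Category C']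
    [Limits.HasFiniteColimits C]
    [Limits.HasFiniteLimits C']
    (M : ModelStruct C) (M' : ModelStruct C')
    (F : C ⥤ C') (G : C' ⥤ C) (adj : F ⊣ G)
    (hCof : ∀ {X Y : C} (f : X ⟶ Y), M.Cof f → M'.Cof (F.map f))
    (hTrivCof : ∀ {X Y : C} (f : X ⟶ Y), M.Cof f → M.W f →
      M'.Cof (F.map f) ∧ M'.W (F.map f)) :
    (∀ {X Y : C} (f : X ⟶ Y), M.W f → M.Cofibrant X → M.Cofibrant Y → M'.W (F.map f)) ∧
    (∀ {X Y : C'} (f : X ⟶ Y), M'.W f → M'.Fibrant X → M'.Fibrant Y → M.W (G.map f)) ∧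
    ∃ (LF : M.W.Localization ⥤ M'.W.Localization) (α : M.W.Q ⋙ LF ⟶ F ⋙ M'.W.Q)
      (RG : M'.W.Localization ⥤ M.W.Localization) (β : G ⋙ M.W.Q ⟶ M'.W.Q ⋙ RG),
      IsLeftDerived M.W.Q (F ⋙ M'.W.Q) LF α ∧
      IsRightDerived M'.W.Q (G ⋙ M.W.Q) RG β ∧
      Nonempty (LF ⊣ RG) := by
  have hG {X Y : C'} {p : X ⟶ Y} (hp : M'.Fib p) (hpW : M'.W p) :=
    M.fib_and_W_map_of_adjunction adj hCof hp hpW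
  have hFQ {X Y : C} (f : X ⟶ Y) (hf : M.Cof f) (hfW : M.W f) : IsIso ((F ⋙ M'.W.Q).map f) :=
    Localization.inverts M'.W.Q M'.W _ (hTrivCof f hf hfW).2
  have hGQ {X Y : C'} (f : X ⟶ Y) (hf : M'.Fib f) (hfW : M'.W f) :
      IsIso ((G ⋙ M.W.Q).map f) :=
    Localization.inverts M.W.Q M.W _ (hG hf hfW).2
  refine ⟨fun f hf hX hY => M.kenBrown M'.W F (fun f hf hfW => (hTrivCof f hf hfW).2) hf hX hY,
    fun f hf hX hY => M'.op.kenBrown M.op.W G.op (fun f hf hfW => (hG hf hfW).2) (f := f.op) hf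
      (M'.fibrant_iff_cofibrant_op.1 hY) (M'.fibrant_iff_cofibrant_op.1 hX),
    _, _, _, _, M.isLeftDerived_totalLeftDerived _ hFQ,
    M'.isRightDerived_totalRightDerived _ hGQ, ?_⟩
  have := (M.isLeftDerived_totalLeftDerived _ hFQ).isLeftDerivedFunctor M.W
  have := (M'.isRightDerived_totalRightDerived _ hGQ).isRightDerivedFunctor M'.W
  have := (M.isAbsoluteLeftDerived_totalLeftDerived _ hFQ _
    (M'.totalRightDerived _ hGQ)).isLeftDerivedFunctor M.W
  have := (M'.isAbsoluteRightDerived_totalRightDerived _ hGQ _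
    (M.totalLeftDerived _ hFQ)).isRightDerivedFunctor M'.W
  exact ⟨adj.derived M.W M'.W (M.totalLeftDerivedCounit _ hFQ) (M'.totalRightDerivedUnit _ hGQ)⟩

/-- a Quillen adjunction (`F` preserves cofibrations and trivial
cofibrations) implies, via Ken Brown's lemma, that `F` preserves weak equivalences
between cofibrant objects and `G` preserves weak equivalences between fibrant objects,
and the total derived functors exist and satisfy `LF ⊣ RG`. -/
theorem stmt17 {C : Type*} [Category C] {C' : Type*} [Category C']
    [Limits.HasFiniteLimits C] [Limits.HasFiniteColimits C]
    [Limits.HasFiniteLimits C'] [Limits.HasFiniteColimits C']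
    (M : ModelStruct C) (M' : ModelStruct C')
    (F : C ⥤ C') (G : C' ⥤ C) (adj : F ⊣ G)
    (hCof : ∀ {X Y : C} (f : X ⟶ Y), M.Cof f → M'.Cof (F.map f))
    (hTrivCof : ∀ {X Y : C} (f : X ⟶ Y), M.Cof f → M.W f →
      M'.Cof (F.map f) ∧ M'.W (F.map f)) :
    (∀ {X Y : C} (f : X ⟶ Y), M.W f → M.Cofibrant X → M.Cofibrant Y → M'.W (F.map f)) ∧
    (∀ {X Y : C'} (f : X ⟶ Y), M'.W f → M'.Fibrant X → M'.Fibrant Y → M.W (G.map f)) ∧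
    ∃ (LF : M.W.Localization ⥤ M'.W.Localization) (α : M.W.Q ⋙ LF ⟶ F ⋙ M'.W.Q)
      (RG : M'.W.Localization ⥤ M.W.Localization) (β : G ⋙ M.W.Q ⟶ M'.W.Q ⋙ RG),
      IsLeftDerived M.W.Q (F ⋙ M'.W.Q) LF α ∧
      IsRightDerived M'.W.Q (G ⋙ M.W.Q) RG β ∧
      Nonempty (LF ⊣ RG) :=
  stmt17_general M M' F G adj hCof hTrivCof
end
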